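/- arXiv:2311.06026 — 2 statements merged into one kernel-verified Lean document; each statement's English description precedes it below -/
import Mathlib

section
/- Let f : X → ℝ ∪ {±∞} be a proper lsc convex function on a finite-dimensional Hilbert space X and let (x̄, v̄) be in the graph of ∂f. Then the tangent cone to the set ∂f*(v̄) = (∂f)⁻¹(v̄) at x̄ is contained in the kernel of the second subderivative: T_{∂f*(v̄)}(x̄) ⊂ {w ∈ X : d²f(x̄, v̄)(w) = 0}. -/
open Filter Topology
open scoped RealInnerProductSpace

variable {X : Type*} [NormedAddCommGroup X] [InnerProductSpace ℝ X] [FiniteDimensional ℝ X]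

/-- The convex subdifferential of an extended-real-valued function. -/
def subdiff (f : X → EReal) (x : X) : Set X :=
  {v | ∀ y, f x + ((⟪v, y - x⟫ : ℝ) : EReal) ≤ f y}

/-- The contingent (tangent) cone to `Ω` at `x`. -/
def contingentCone (Ω : Set X) (x : X) : Set X :=
  {w | ∃ t : ℕ → ℝ, ∃ ws : ℕ → X, (∀ k, 0 < t k) ∧ Tendsto t atTop (𝓝 0) ∧
    Tendsto ws atTop (𝓝 w) ∧ ∀ k, x + t k • ws k ∈ Ω}

/-- The second subderivative
`d²f(x, v)(w) = liminf_{t↓0, w'→w} (f(x + t w') - f(x) - t ⟪v, w'⟫) / (t²/2)`. -/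
noncomputable def secondSubderivative (f : X → EReal) (x v : X) (w : X) : EReal :=
  Filter.liminf (fun p : ℝ × X =>
      ((2 / p.1 ^ 2 : ℝ) : EReal) *
        (f (x + p.1 • p.2) - f x - ((p.1 * ⟪v, p.2⟫ : ℝ) : EReal)))
    ((𝓝[>] (0 : ℝ)) ×ˢ 𝓝 w)

/-! A subgradient `v̄` at `x̄` gives the affine minorant `f x̄ + ⟪v̄, · - x̄⟫` of `f`, which touches `f`
at every point of `(∂f)⁻¹(v̄)`. Hence the second-order difference quotients are nonnegative
everywhere and vanish along every sequence `x̄ + tₖ wₖ` realising a tangent direction of that set. -/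

section

variable {E : Type*} [NormedAddCommGroup E] [InnerProductSpace ℝ E] {f : E → EReal} {x y v : E}

theorem ne_top_of_mem_subdiff (hf : ∃ y, f y ≠ ⊤) (hv : v ∈ subdiff f x) : f x ≠ ⊤ := by
  obtain ⟨y, hy⟩ := hf
  intro hx
  have h := hv y
  rw [hx, EReal.top_add_of_ne_bot (EReal.coe_ne_bot _), top_le_iff] at h
  exact hy h

theorem coe_inner_le_sub_of_mem_subdiff (hx_bot : f x ≠ ⊥) (hx_top : f x ≠ ⊤)
    (hv : v ∈ subdiff f x) (y : E) : ((⟪v, y - x⟫ : ℝ) : EReal) ≤ f y - f x :=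
  (EReal.le_sub_iff_add_le (.inl hx_bot) (.inl hx_top)).2 (add_comm (f x) _ ▸ hv y)

theorem sub_eq_coe_inner_of_mem_subdiff (hx_bot : f x ≠ ⊥) (hx_top : f x ≠ ⊤)
    (hv : v ∈ subdiff f x) (hy : v ∈ subdiff f y) : f y - f x = ((⟪v, y - x⟫ : ℝ) : EReal) := by
  refine le_antisymm ?_ (coe_inner_le_sub_of_mem_subdiff hx_bot hx_top hv y)
  have hyx : f y + ((-⟪v, y - x⟫ : ℝ) : EReal) ≤ f x := by
    simpa only [← inner_neg_right, neg_sub] using hy x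
  rw [EReal.sub_le_iff_le_add (.inl hx_bot) (.inl hx_top), add_comm]
  simpa only [sub_eq_add_neg, EReal.coe_neg, neg_neg] using
    (EReal.le_sub_iff_add_le (.inl (EReal.coe_ne_bot _)) (.inl (EReal.coe_ne_top _))).2 hyx

noncomputable def secondDiffQuotient (f : E → EReal) (x v : E) (p : ℝ × E) : EReal :=
  ((2 / p.1 ^ 2 : ℝ) : EReal) * (f (x + p.1 • p.2) - f x - ((p.1 * ⟪v, p.2⟫ : ℝ) : EReal))

theorem secondSubderivative_eq_liminf (f : E → EReal) (x v w : E) :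
    secondSubderivative f x v w = liminf (secondDiffQuotient f x v) (𝓝[>] 0 ×ˢ 𝓝 w) :=
  rfl

theorem secondDiffQuotient_nonneg (hx_bot : f x ≠ ⊥) (hx_top : f x ≠ ⊤)
    (hv : v ∈ subdiff f x) (p : ℝ × E) : 0 ≤ secondDiffQuotient f x v p := by
  refine mul_nonneg (EReal.coe_nonneg.2 (by positivity)) ?_
  rw [EReal.sub_nonneg (.inr (EReal.coe_ne_top _)) (.inr (EReal.coe_ne_bot _))]
  simpa only [add_sub_cancel_left, real_inner_smul_right] using
    coe_inner_le_sub_of_mem_subdiff hx_bot hx_top hv (x + p.1 • p.2)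

theorem secondDiffQuotient_eq_zero (hx_bot : f x ≠ ⊥) (hx_top : f x ≠ ⊤)
    (hv : v ∈ subdiff f x) {t : ℝ} {u : E} (h : v ∈ subdiff f (x + t • u)) :
    secondDiffQuotient f x v (t, u) = 0 := by
  rw [secondDiffQuotient, sub_eq_coe_inner_of_mem_subdiff hx_bot hx_top hv h, add_sub_cancel_left,
    real_inner_smul_right, EReal.sub_self (EReal.coe_ne_top _) (EReal.coe_ne_bot _), mul_zero]

theorem secondSubderivative_nonneg (hx_bot : f x ≠ ⊥) (hx_top : f x ≠ ⊤)
    (hv : v ∈ subdiff f x) (w : E) : 0 ≤ secondSubderivative f x v w :=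
  secondSubderivative_eq_liminf f x v w ▸ le_liminf_of_le (by isBoundedDefault)
    (.of_forall (secondDiffQuotient_nonneg hx_bot hx_top hv))

theorem secondSubderivative_nonpos_of_mem_contingentCone (hx_bot : f x ≠ ⊥) (hx_top : f x ≠ ⊤)
    (hv : v ∈ subdiff f x) {w : E} (hw : w ∈ contingentCone {y | v ∈ subdiff f y} x) :
    secondSubderivative f x v w ≤ 0 := by
  obtain ⟨t, u, ht_pos, ht, hu, hmem⟩ := hw
  have hseq : Tendsto (fun k ↦ (t k, u k)) atTop (𝓝[>] 0 ×ˢ 𝓝 w) :=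
    (tendsto_nhdsWithin_iff.2 ⟨ht, .of_forall ht_pos⟩).prodMk hu
  calc secondSubderivative f x v w
      ≤ liminf (secondDiffQuotient f x v ∘ fun k ↦ (t k, u k)) atTop := by
        rw [secondSubderivative_eq_liminf, liminf_comp]
        exact liminf_le_liminf_of_le hseq
    _ = 0 := by
        simp only [Function.comp_def, secondDiffQuotient_eq_zero hx_bot hx_top hv (hmem _),
          liminf_const]

end

theorem tangentCone_subset_ker_secondSubderivative_general (f : X → EReal)
    (hproper_bot : ∀ x, f x ≠ ⊥) (hproper_top : ∃ x, f x ≠ ⊤)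
    (xb vb : X) (hvb : vb ∈ subdiff f xb) :
    contingentCone {x | vb ∈ subdiff f x} xb ⊆
      {w | secondSubderivative f xb vb w = 0} := by
  intro w hw
  have hxb_top := ne_top_of_mem_subdiff hproper_top hvb
  exact le_antisymm
    (secondSubderivative_nonpos_of_mem_contingentCone (hproper_bot xb) hxb_top hvb hw)
    (secondSubderivative_nonneg (hproper_bot xb) hxb_top hvb w)

/-- For a proper lsc convex `f` with `v̄ ∈ ∂f(x̄)`, the tangent cone to `(∂f)⁻¹(v̄)` at `x̄` is
contained in the kernel of the second subderivative `d²f(x̄, v̄)`. -/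
theorem tangentCone_subset_ker_secondSubderivative (f : X → EReal)
    (hproper_bot : ∀ x, f x ≠ ⊥) (hproper_top : ∃ x, f x ≠ ⊤)
    (hlsc : LowerSemicontinuous f)
    (hconv : ∀ x₁ x₂ : X, ∀ a b : ℝ, 0 ≤ a → 0 ≤ b → a + b = 1 →
      f (a • x₁ + b • x₂) ≤ (a : EReal) * f x₁ + (b : EReal) * f x₂)
    (xb vb : X) (hvb : vb ∈ subdiff f xb) :
    contingentCone {x | vb ∈ subdiff f x} xb ⊆
      {w | secondSubderivative f xb vb w = 0} :=
  tangentCone_subset_ker_secondSubderivative_general f hproper_bot hproper_top xb vb hvb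
end

section
/- Let f : X → ℝ ∪ {+∞} be a proper lsc convex function with v̄ ∈ ∂f(x̄), and suppose ∂f is metrically subregular at x̄ for v̄, i.e., f satisfies the quadratic growth condition: there exist ε > 0 and ℓ > 0 with f(x) ≥ f(x̄) + ⟨v̄, x − x̄⟩ + (ℓ/2) dist²(x, (∂f)⁻¹(v̄)) for all x with ‖x − x̄‖ ≤ ε. Then every w with d²f(x̄, v̄)(w) = 0 belongs to the tangent cone T_{(∂f)⁻¹(v̄)}(x̄); hence ker d²f(x̄, v̄) = T_{(∂f)⁻¹(v̄)}(x̄). -/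
open Filter Topology
open scoped RealInnerProductSpace

variable {X : Type*} [NormedAddCommGroup X] [InnerProductSpace ℝ X] [FiniteDimensional ℝ X]

/-- If a proper lsc convex `f` satisfies the quadratic growth condition at `x̄` for
`v̄ ∈ ∂f(x̄)` (equivalently, `∂f` is metrically subregular at `x̄` for `v̄`), then the kernel
of the second subderivative `d²f(x̄, v̄)` equals the tangent cone to `(∂f)⁻¹(v̄)` at `x̄`. -/
theorem ker_secondSubderivative_eq_tangentCone (f : X → EReal)
    (hproper_bot : ∀ x, f x ≠ ⊥) (hproper_top : ∃ x, f x ≠ ⊤)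
    (hlsc : LowerSemicontinuous f)
    (hconv : ∀ x₁ x₂ : X, ∀ a b : ℝ, 0 ≤ a → 0 ≤ b → a + b = 1 →
      f (a • x₁ + b • x₂) ≤ (a : EReal) * f x₁ + (b : EReal) * f x₂)
    (xb vb : X) (hvb : vb ∈ subdiff f xb)
    (hgrowth : ∃ ε > (0 : ℝ), ∃ ℓ > (0 : ℝ), ∀ x : X, ‖x - xb‖ ≤ ε →
      f xb + ((⟪vb, x - xb⟫ + ℓ / 2 * (Metric.infDist x {x' | vb ∈ subdiff f x'}) ^ 2 : ℝ) :
        EReal) ≤ f x) :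
    {w | secondSubderivative f xb vb w = 0} =
      contingentCone {x | vb ∈ subdiff f x} xb := by
  obtain ⟨ε, hε, ℓ, hℓ, hg⟩ := hgrowth
  set S : Set X := {x | vb ∈ subdiff f x} with hSdef
  have hxbS : xb ∈ S := hvb
  have hSne : S.Nonempty := ⟨xb, hxbS⟩
  -- f xb is a real number
  obtain ⟨y₀, hy₀⟩ := hproper_top
  have hxb_ne_top : f xb ≠ ⊤ := by
    intro h
    have h2 := hvb y₀
    rw [h, EReal.top_add_coe] at h2
    exact hy₀ (top_le_iff.mp h2)
  obtain ⟨a, ha⟩ : ∃ a : ℝ, f xb = a :=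
    ⟨(f xb).toReal, (EReal.coe_toReal hxb_ne_top (hproper_bot xb)).symm⟩
  -- S is closed
  have hScl : IsClosed S := by
    have hrw : S = ⋂ y, {x | f x + ((⟪vb, y - x⟫ : ℝ) : EReal) ≤ f y} := by
      ext x
      simp only [hSdef, Set.mem_setOf_eq, Set.mem_iInter, subdiff]
    rw [hrw]
    refine isClosed_iInter fun y => ?_
    have hlsc2 : LowerSemicontinuous (fun x => f x + ((⟪vb, y - x⟫ : ℝ) : EReal)) := by
      intro x
      refine LowerSemicontinuousAt.add' (hlsc x) ?_ ?_
      · refine Continuous.lowerSemicontinuous ?_ |>.lowerSemicontinuousAt x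
        exact continuous_coe_real_ereal.comp
          ((continuous_const.inner (continuous_const.sub continuous_id)))
      · exact EReal.continuousAt_add (Or.inr (EReal.coe_ne_bot _)) (Or.inr (EReal.coe_ne_top _))
    exact hlsc2.isClosed_preimage (f y)
  -- the nonnegativity of the difference quotient
  have hpos : ∀ t : ℝ, 0 < t → ∀ u : X,
      (0 : EReal) ≤ ((2 / t ^ 2 : ℝ) : EReal) *
        (f (xb + t • u) - f xb - ((t * ⟪vb, u⟫ : ℝ) : EReal)) := by
    intro t ht u
    have h1 := hvb (xb + t • u)
    rw [ha] at h1
    have hinner : ⟪vb, xb + t • u - xb⟫ = t * ⟪vb, u⟫ := by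
      rw [add_sub_cancel_left, real_inner_smul_right]
    rw [hinner] at h1
    by_cases hF : f (xb + t • u) = ⊤
    · rw [hF, ha, EReal.top_sub_coe, EReal.top_sub_coe, EReal.coe_mul_top_of_pos (by positivity)]
      exact le_top
    · obtain ⟨b, hb⟩ : ∃ b : ℝ, f (xb + t • u) = b :=
        ⟨(f _).toReal, (EReal.coe_toReal hF (hproper_bot _)).symm⟩
      rw [hb] at h1 ⊢
      rw [ha]
      have hreal : a + t * ⟪vb, u⟫ ≤ b := by exact_mod_cast h1
      have hcast : ((2 / t ^ 2 : ℝ) : EReal) * ((b : EReal) - (a : ℝ) - ((t * ⟪vb, u⟫ : ℝ) : EReal))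
          = (((2 / t ^ 2) * (b - a - t * ⟪vb, u⟫) : ℝ) : EReal) := by norm_cast
      rw [hcast]
      have hnn : (0 : ℝ) ≤ (2 / t ^ 2) * (b - a - t * ⟪vb, u⟫) := by
        have h2 : (0:ℝ) ≤ 2 / t ^ 2 := by positivity
        nlinarith
      exact_mod_cast hnn
  -- liminf is nonneg
  have hlim_ge : ∀ w : X, (0 : EReal) ≤ secondSubderivative f xb vb w := by
    intro w
    unfold secondSubderivative
    refine le_liminf_of_le (by isBoundedDefault) ?_
    have hev : ∀ᶠ p : ℝ × X in (𝓝[>] (0:ℝ)) ×ˢ 𝓝 w, 0 < p.1 :=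
      Eventually.prod_inl (eventually_mem_nhdsWithin) _
    exact hev.mono fun p hp => hpos p.1 hp p.2
  ext w
  simp only [Set.mem_setOf_eq]
  constructor
  · -- kernel ⊆ tangent cone
    intro hw
    have hliminf : Filter.liminf (fun p : ℝ × X =>
        ((2 / p.1 ^ 2 : ℝ) : EReal) *
          (f (xb + p.1 • p.2) - f xb - ((p.1 * ⟪vb, p.2⟫ : ℝ) : EReal)))
        ((𝓝[>] (0 : ℝ)) ×ˢ 𝓝 w) = 0 := hw
    have key : ∀ k : ℕ, ∃ q : ℝ × X, 0 < q.1 ∧ q.1 < 1/(k+1 : ℝ) ∧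
        dist q.2 w < 2/(k+1 : ℝ) ∧ xb + q.1 • q.2 ∈ S := by
      intro k
      have hk1 : (0:ℝ) < (k+1 : ℝ) := by positivity
      have hkpos : (0:ℝ) < 1/(k+1 : ℝ) := by positivity
      have δpos : (0 : EReal) < ((ℓ / (k+1 : ℝ) ^ 2 : ℝ) : EReal) :=
        EReal.coe_pos.mpr (by positivity)
      have hfreq : ∃ᶠ p : ℝ × X in (𝓝[>] (0:ℝ)) ×ˢ 𝓝 w,
          ((2 / p.1 ^ 2 : ℝ) : EReal) *
            (f (xb + p.1 • p.2) - f xb - ((p.1 * ⟪vb, p.2⟫ : ℝ) : EReal))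
            < ((ℓ / (k+1 : ℝ) ^ 2 : ℝ) : EReal) :=
        frequently_lt_of_liminf_lt (by isBoundedDefault) (hliminf ▸ δpos)
      have e1 : ∀ᶠ p : ℝ × X in (𝓝[>] (0:ℝ)) ×ˢ 𝓝 w, p.1 ∈ Set.Ioo 0 (1/(k+1 : ℝ)) :=
        Eventually.prod_inl (Ioo_mem_nhdsGT_of_mem ⟨le_refl _, hkpos⟩) _
      have e2 : ∀ᶠ p : ℝ × X in (𝓝[>] (0:ℝ)) ×ˢ 𝓝 w, dist p.2 w < 1/(k+1 : ℝ) :=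
        Eventually.prod_inr (Metric.ball_mem_nhds w hkpos) _
      have e3 : ∀ᶠ p : ℝ × X in (𝓝[>] (0:ℝ)) ×ˢ 𝓝 w, p.1 * ‖p.2‖ < ε := by
        have h1 : Tendsto (fun p : ℝ × X => p.1 * ‖p.2‖) ((𝓝[>] (0:ℝ)) ×ˢ 𝓝 w)
            (𝓝 (0 * ‖w‖)) :=
          (tendsto_fst.mono_right nhdsWithin_le_nhds).mul tendsto_snd.norm
        rw [zero_mul] at h1
        exact h1.eventually_lt_const hε
      obtain ⟨p, hlt, ⟨hIoo, hball⟩, hmul⟩ :=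
        (hfreq.and_eventually ((e1.and e2).and e3)).exists
      obtain ⟨hq1, hq2⟩ := hIoo
      set tk := p.1 with htk
      set u := p.2 with hu
      have ht2 : (0:ℝ) < tk^2 := by positivity
      have hnorm : ‖xb + tk • u - xb‖ ≤ ε := by
        rw [add_sub_cancel_left, norm_smul, Real.norm_eq_abs, abs_of_pos hq1]
        exact hmul.le
      have hgrow := hg (xb + tk • u) hnorm
      rw [ha] at hgrow
      have hinner : ⟪vb, xb + tk • u - xb⟫ = tk * ⟪vb, u⟫ := by
        rw [add_sub_cancel_left, real_inner_smul_right]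
      rw [hinner] at hgrow
      set d := Metric.infDist (xb + tk • u) S with hd
      have hne_top : f (xb + tk • u) ≠ ⊤ := by
        intro h
        rw [h, ha, EReal.top_sub_coe, EReal.top_sub_coe,
          EReal.coe_mul_top_of_pos (by positivity)] at hlt
        exact not_top_lt hlt
      obtain ⟨b, hb⟩ : ∃ b : ℝ, f (xb + tk • u) = b :=
        ⟨_, (EReal.coe_toReal hne_top (hproper_bot _)).symm⟩
      rw [hb, ha] at hlt
      rw [hb] at hgrow
      have hgrow' : a + (tk * ⟪vb, u⟫ + ℓ/2 * d^2) ≤ b := by exact_mod_cast hgrow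
      have hlt' : (2 / tk^2) * (b - a - tk * ⟪vb, u⟫) < ℓ / (k+1:ℝ)^2 := by
        have hcast : ((2 / tk ^ 2 : ℝ) : EReal) *
            ((b : EReal) - (a : ℝ) - ((tk * ⟪vb, u⟫ : ℝ) : EReal))
            = (((2 / tk ^ 2) * (b - a - tk * ⟪vb, u⟫) : ℝ) : EReal) := by norm_cast
        rw [hcast] at hlt
        exact_mod_cast hlt
      have hd0 : 0 ≤ d := Metric.infDist_nonneg
      have hdlt : d < tk / (k+1:ℝ) := by
        refine lt_of_pow_lt_pow_left₀ 2 (by positivity) ?_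
        rw [div_pow]
        have hk2 : (0:ℝ) < ((k:ℝ)+1)^2 := by positivity
        have hm : ℓ/2*d^2 ≤ b - a - tk * ⟪vb, u⟫ := by linarith
        have h6 : 2/tk^2 * (ℓ/2*d^2) < ℓ / ((k:ℝ)+1)^2 :=
          lt_of_le_of_lt (mul_le_mul_of_nonneg_left hm (by positivity)) hlt'
        have h6' : (ℓ*d^2)/tk^2 < ℓ/((k:ℝ)+1)^2 := by
          calc (ℓ*d^2)/tk^2 = 2/tk^2*(ℓ/2*d^2) := by ring
            _ < _ := h6
        rw [div_lt_div_iff₀ ht2 hk2] at h6'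
        rw [lt_div_iff₀ hk2]
        nlinarith [h6', hℓ]
      obtain ⟨y, hyS, hyd⟩ := hScl.exists_infDist_eq_dist hSne (xb + tk • u)
      refine ⟨(tk, tk⁻¹ • (y - xb)), hq1, hq2, ?_, ?_⟩
      · have hveq : tk⁻¹ • (y - xb) - u = tk⁻¹ • (y - (xb + tk • u)) := by
          rw [smul_sub, smul_sub, smul_add, smul_smul,
            inv_mul_cancel₀ (ne_of_gt hq1), one_smul]
          abel
        have hdist1 : dist (tk⁻¹ • (y - xb)) u = d / tk := by
          rw [dist_eq_norm, hveq, norm_smul, Real.norm_eq_abs,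
            abs_of_pos (inv_pos.mpr hq1), norm_sub_rev, ← dist_eq_norm, ← hyd]
          rw [inv_mul_eq_div]
        have hdu : dist (tk⁻¹ • (y - xb)) u < 1/(k+1:ℝ) := by
          rw [hdist1, div_lt_iff₀ hq1]
          have : (1/((k:ℝ)+1))*tk = tk/((k:ℝ)+1) := by ring
          rw [this]
          exact hdlt
        calc dist (tk⁻¹ • (y - xb)) w ≤ dist (tk⁻¹ • (y - xb)) u + dist u w :=
              dist_triangle _ _ _
          _ < 1/(k+1:ℝ) + 1/(k+1:ℝ) := add_lt_add hdu (Metric.mem_ball.mp hball)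
          _ = 2/(k+1:ℝ) := by ring
      · show xb + tk • (tk⁻¹ • (y - xb)) ∈ S
        rw [smul_smul, mul_inv_cancel₀ (ne_of_gt hq1), one_smul, add_sub_cancel]
        exact hyS
    choose q hq1 hq2 hq3 hq4 using key
    refine ⟨fun k => (q k).1, fun k => (q k).2, hq1, ?_, ?_, hq4⟩
    · refine squeeze_zero (fun k => (hq1 k).le) (fun k => (hq2 k).le) ?_
      exact tendsto_one_div_add_atTop_nhds_zero_nat
    · rw [tendsto_iff_dist_tendsto_zero]
      refine squeeze_zero (fun k => dist_nonneg) (fun k => (hq3 k).le) ?_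
      have h2 := tendsto_one_div_add_atTop_nhds_zero_nat.const_mul (2:ℝ)
      simpa [mul_one_div, div_eq_mul_inv] using h2
  · -- tangent cone ⊆ kernel
    rintro ⟨t, ws, htpos, ht0, hws, hmem⟩
    refine le_antisymm ?_ (hlim_ge w)
    have htend : Tendsto (fun k => (t k, ws k)) atTop ((𝓝[>] (0:ℝ)) ×ˢ 𝓝 w) := by
      refine Tendsto.prodMk ?_ hws
      exact tendsto_nhdsWithin_of_tendsto_nhds_of_eventually_within _ ht0
        (Eventually.of_forall htpos)
    unfold secondSubderivative
    refine liminf_le_of_frequently_le (htend.frequently (Frequently.of_forall ?_))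
      (by isBoundedDefault)
    intro k
    simp only
    have hx : vb ∈ subdiff f (xb + t k • ws k) := hmem k
    have h1 := hx xb
    rw [ha] at h1
    have hinner : ⟪vb, xb - (xb + t k • ws k)⟫ = -(t k * ⟪vb, ws k⟫) := by
      rw [sub_add_cancel_left, inner_neg_right, real_inner_smul_right]
    rw [hinner] at h1
    have hne_top : f (xb + t k • ws k) ≠ ⊤ := by
      intro h
      rw [h, EReal.top_add_coe] at h1
      exact EReal.coe_ne_top a (top_le_iff.mp h1)
    obtain ⟨b, hb⟩ : ∃ b : ℝ, f (xb + t k • ws k) = b :=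
      ⟨(f _).toReal, (EReal.coe_toReal hne_top (hproper_bot _)).symm⟩
    rw [hb] at h1
    have hreal : b + -(t k * ⟪vb, ws k⟫) ≤ a := by exact_mod_cast h1
    rw [hb, ha]
    have hcast : ((2 / (t k) ^ 2 : ℝ) : EReal) *
        ((b : EReal) - (a : ℝ) - ((t k * ⟪vb, ws k⟫ : ℝ) : EReal))
        = (((2 / (t k) ^ 2) * (b - a - t k * ⟪vb, ws k⟫) : ℝ) : EReal) := by norm_cast
    rw [hcast]
    have hfinal : (2 / (t k) ^ 2) * (b - a - t k * ⟪vb, ws k⟫) ≤ 0 := by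
      have h2 : (0:ℝ) ≤ 2 / (t k) ^ 2 := by positivity
      nlinarith
    exact_mod_cast hfinal
end
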